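/- arXiv:2602.08944 — 2 statements merged into one kernel-verified Lean document; each statement's English description precedes it below -/
import Mathlib

section
/- Let γ ∈ [1,∞), K > 0, and a, b ∈ ℝⁿ with |a| ≥ K. Then for every α ∈ [γ,∞) one has |a|^γ ≤ 2^γ |a-b|^γ + 2^{α-1} K^{γ-α} |b|^α. -/
/-!
If `‖b‖ < K / 2`, then `‖a‖ ≤ 2 ‖a - b‖` because `‖a‖ ≥ K`, and the first term alone suffices.
Otherwise convexity of `t ↦ t ^ γ` gives `‖a‖ ^ γ ≤ 2 ^ (γ - 1) (‖a - b‖ ^ γ + ‖b‖ ^ γ)`, and since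
`2 ‖b‖ ≥ K` one can trade `(2 ‖b‖) ^ γ` for `K ^ (γ - α) (2 ‖b‖) ^ α`.
-/

open Real

lemma Real.rpow_add_le_mul_rpow_add_rpow {x y p : ℝ} (hx : 0 ≤ x) (hy : 0 ≤ y) (hp : 1 ≤ p) :
    (x + y) ^ p ≤ 2 ^ (p - 1) * (x ^ p + y ^ p) := by
  lift x to NNReal using hx
  lift y to NNReal using hy
  exact_mod_cast NNReal.rpow_add_le_mul_rpow_add_rpow x y hp

lemma Real.rpow_le_rpow_sub_mul_rpow_of_le {s K γ α : ℝ} (hK : 0 < K) (hKs : K ≤ s)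
    (hγα : γ ≤ α) : s ^ γ ≤ K ^ (γ - α) * s ^ α := by
  have hs : 0 < s := hK.trans_le hKs
  calc s ^ γ = s ^ (γ - α) * s ^ α := by rw [← rpow_add hs, sub_add_cancel]
    _ ≤ K ^ (γ - α) * s ^ α := by
      gcongr ?_ * _
      exact rpow_le_rpow_of_nonpos hK hKs (sub_nonpos.2 hγα)

lemma Real.two_rpow_sub_one_mul_rpow_le {t K γ α : ℝ} (hK : 0 < K) (ht : K ≤ 2 * t)
    (hγα : γ ≤ α) : 2 ^ (γ - 1) * t ^ γ ≤ 2 ^ (α - 1) * K ^ (γ - α) * t ^ α := by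
  have ht0 : 0 ≤ t := by linarith
  have h := rpow_le_rpow_sub_mul_rpow_of_le hK ht hγα
  rw [mul_rpow zero_le_two ht0, mul_rpow zero_le_two ht0] at h
  rw [rpow_sub_one two_ne_zero, rpow_sub_one two_ne_zero]
  linarith

theorem norm_rpow_le_two_rpow_mul_norm_sub_rpow_add {E : Type*} [SeminormedAddGroup E]
    {γ K α : ℝ} (hγ : 1 ≤ γ) (hK : 0 < K) (hα : γ ≤ α) {a b : E} (ha : K ≤ ‖a‖) :
    ‖a‖ ^ γ ≤ 2 ^ γ * ‖a - b‖ ^ γ + 2 ^ (α - 1) * K ^ (γ - α) * ‖b‖ ^ α := by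
  have hγ0 : 0 ≤ γ := by linarith
  have htri := norm_le_norm_sub_add a b
  have htail : 0 ≤ 2 ^ (α - 1) * K ^ (γ - α) * ‖b‖ ^ α := by positivity
  rcases lt_or_ge ‖b‖ (K / 2) with hb | hb
  · have hab : ‖a‖ ≤ 2 * ‖a - b‖ := by linarith
    calc ‖a‖ ^ γ ≤ (2 * ‖a - b‖) ^ γ := by gcongr
      _ = 2 ^ γ * ‖a - b‖ ^ γ := mul_rpow zero_le_two (norm_nonneg _)
      _ ≤ _ := le_add_of_nonneg_right htail
  · have hb2 : K ≤ 2 * ‖b‖ := by linarith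
    calc ‖a‖ ^ γ ≤ (‖a - b‖ + ‖b‖) ^ γ := by gcongr
      _ ≤ 2 ^ (γ - 1) * (‖a - b‖ ^ γ + ‖b‖ ^ γ) :=
        rpow_add_le_mul_rpow_add_rpow (norm_nonneg _) (norm_nonneg _) hγ
      _ = 2 ^ (γ - 1) * ‖a - b‖ ^ γ + 2 ^ (γ - 1) * ‖b‖ ^ γ := mul_add _ _ _
      _ ≤ _ := add_le_add (by gcongr <;> linarith) (two_rpow_sub_one_mul_rpow_le hK hb2 hα)

/-- Let γ ∈ [1,∞), K > 0, and a, b ∈ ℝⁿ with |a| ≥ K. Then for every α ∈ [γ,∞) one has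
|a|^γ ≤ 2^γ |a-b|^γ + 2^{α-1} K^{γ-α} |b|^α. -/
theorem stmt0 (n : ℕ) (γ K α : ℝ) (hγ : 1 ≤ γ) (hK : 0 < K) (hα : γ ≤ α)
    (a b : EuclideanSpace ℝ (Fin n)) (ha : K ≤ ‖a‖) :
    ‖a‖ ^ γ ≤ 2 ^ γ * ‖a - b‖ ^ γ + 2 ^ (α - 1) * K ^ (γ - α) * ‖b‖ ^ α :=
  norm_rpow_le_two_rpow_mul_norm_sub_rpow_add hγ hK hα ha
end

section
/- Let p ∈ (1,∞), s ∈ (0,1), and n ∈ ℕ with n ≥ 1, and for ρ > 0 set Tail(u;B_ρ(x_o)) := ( ρ^{sp} ∫_{ℝⁿ∖B_ρ(x_o)} |u(x)|^{p-1}/|x-x_o|^{n+sp} dx )^{1/(p-1)}. Then there exists a constant c = c(n) depending only on n such that for every measurable function u : ℝⁿ → ℝ, every x_o ∈ ℝⁿ and every 0 < r < R, one has Tail(u;B_r(x_o))^{p-1} ≤ c(n) (R/r)^n [ Tail(u;B_R(x_o)) + R^{-n/p} ‖u‖_{L^p(B_R(x_o))} ]^{p-1}. -/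
open MeasureTheory Metric

lemma holder_aux {α : Type*} [MeasurableSpace α] (μ : Measure α) [IsFiniteMeasure μ]
    (p : ℝ) (hp : 1 < p) (u : α → ℝ) (hu : AEMeasurable u μ)
    (hint : Integrable (fun x => |u x| ^ p) μ) :
    Integrable (fun x => |u x| ^ (p - 1)) μ ∧
      ∫ x, |u x| ^ (p - 1) ∂μ ≤
        (∫ x, |u x| ^ p ∂μ) ^ ((p - 1) / p) * ((μ Set.univ).toReal) ^ (1 / p) := by
  have hp0 : 0 < p := lt_trans one_pos hp
  have hp1 : 0 < p - 1 := sub_pos.2 hp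
  have habs : ∀ x, |u x| = ‖u x‖ := fun x => (Real.norm_eq_abs _).symm
  have hup : MemLp u (ENNReal.ofReal p) μ := by
    have h := memLp_norm_rpow_iff (p := ENNReal.ofReal p) (q := ENNReal.ofReal p)
      hu.aestronglyMeasurable (by simp [hp0.ne', hp0]) (by simp)
    rw [ENNReal.div_self (by simp [hp0.ne', hp0]) (by simp)] at h
    rw [← h, memLp_one_iff_integrable]
    have : (ENNReal.ofReal p).toReal = p := ENNReal.toReal_ofReal hp0.le
    rw [this]
    simpa only [habs] using hint
  have hf1 : MemLp (fun x => |u x| ^ (p - 1)) (ENNReal.ofReal (p / (p - 1))) μ := by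
    have h := memLp_norm_rpow_iff (p := ENNReal.ofReal p) (q := ENNReal.ofReal (p - 1))
      hu.aestronglyMeasurable (by simp only [ne_eq, ENNReal.ofReal_eq_zero, not_le]; exact hp1) (by simp)
    rw [← ENNReal.ofReal_div_of_pos hp1] at h
    have ht : (ENNReal.ofReal (p - 1)).toReal = p - 1 := ENNReal.toReal_ofReal hp1.le
    rw [ht] at h
    simpa only [habs] using h.2 hup
  have hpq : (p / (p - 1)).HolderConjugate p := (Real.HolderConjugate.conjExponent hp).symm
  have hg1 : MemLp (fun _ : α => (1 : ℝ)) (ENNReal.ofReal p) μ := memLp_const 1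
  have hInt : Integrable (fun x => |u x| ^ (p - 1)) μ :=
    hf1.integrable (ENNReal.one_le_ofReal.2 hpq.lt.le)
  refine ⟨hInt, ?_⟩
  have H := integral_mul_norm_le_Lp_mul_Lq (μ := μ) hpq hf1 hg1
  have e1 : ∀ x : α, ‖|u x| ^ (p - 1)‖ = |u x| ^ (p - 1) := by
    intro x
    rw [Real.norm_eq_abs, abs_of_nonneg (Real.rpow_nonneg (abs_nonneg _) _)]
  have e2 : ∀ x : α, (|u x| ^ (p - 1)) ^ (p / (p - 1)) = |u x| ^ p := by
    intro x
    rw [← Real.rpow_mul (abs_nonneg _)]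
    congr 1
    field_simp
  simp only [e1, e2, norm_one, Real.one_rpow, integral_const, smul_eq_mul, mul_one,
    one_div_div] at H
  exact H


/-- Tail comparison over concentric balls: there exists c = c(n) such that
Tail(u;B_r(x₀))^{p-1} ≤ c (R/r)^n [ Tail(u;B_R(x₀)) + R^{-n/p} ‖u‖_{L^p(B_R(x₀))} ]^{p-1},
where Tail(u;B_ρ(x₀))^{p-1} = ρ^{sp} ∫_{ℝⁿ∖B_ρ(x₀)} |u(x)|^{p-1}/|x-x₀|^{n+sp} dx. -/
theorem stmt2 (n : ℕ) (hn : 1 ≤ n) :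
    ∃ c : ℝ, 0 < c ∧
      ∀ (p s : ℝ), 1 < p → 0 < s → s < 1 →
      ∀ (u : EuclideanSpace ℝ (Fin n) → ℝ), Measurable u →
      ∀ (x₀ : EuclideanSpace ℝ (Fin n)) (r R : ℝ), 0 < r → r < R →
      IntegrableOn (fun x => |u x| ^ (p - 1) / ‖x - x₀‖ ^ ((n : ℝ) + s * p))
        (Metric.ball x₀ R)ᶜ →
      IntegrableOn (fun x => |u x| ^ p) (Metric.ball x₀ R) →
      r ^ (s * p) * ∫ x in (Metric.ball x₀ r)ᶜ, |u x| ^ (p - 1) / ‖x - x₀‖ ^ ((n : ℝ) + s * p) ≤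
        c * (R / r) ^ (n : ℝ) *
          ((R ^ (s * p) *
              ∫ x in (Metric.ball x₀ R)ᶜ, |u x| ^ (p - 1) / ‖x - x₀‖ ^ ((n : ℝ) + s * p))
              ^ (1 / (p - 1)) +
            R ^ (-(n : ℝ) / p) * (∫ x in Metric.ball x₀ R, |u x| ^ p) ^ (1 / p)) ^ (p - 1) := by
  classical
  set V : ℝ := (volume (ball (0 : EuclideanSpace ℝ (Fin n)) 1)).toReal with hVdef
  have hV0 : 0 ≤ V := ENNReal.toReal_nonneg
  refine ⟨2 * (V + 1), by positivity, ?_⟩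
  intro p s hp hs hs1 u hu x₀ r R hr hrR hIR hIp
  haveI : Nonempty (Fin n) := ⟨⟨0, hn⟩⟩
  have hp0 : 0 < p := lt_trans one_pos hp
  have hp1 : 0 < p - 1 := sub_pos.2 hp
  have hR : 0 < R := hr.trans hrR
  have hsp : 0 < s * p := mul_pos hs hp0
  set f : EuclideanSpace ℝ (Fin n) → ℝ :=
    fun x => |u x| ^ (p - 1) / ‖x - x₀‖ ^ ((n : ℝ) + s * p) with hfdef
  have hf0 : ∀ x, 0 ≤ f x := fun x =>
    div_nonneg (Real.rpow_nonneg (abs_nonneg _) _) (Real.rpow_nonneg (norm_nonneg _) _)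
  have hfm : Measurable f := by
    simp only [hfdef]; fun_prop
  haveI : IsFiniteMeasure (volume.restrict (ball x₀ R)) :=
    ⟨by rw [Measure.restrict_apply_univ]; exact measure_ball_lt_top⟩
  obtain ⟨hK_int, hK_le⟩ := holder_aux (volume.restrict (ball x₀ R)) p hp u
    hu.aemeasurable.restrict hIp
  have hvol : ((volume.restrict (ball x₀ R)) Set.univ).toReal = R ^ n * V := by
    rw [Measure.restrict_apply_univ, Measure.addHaar_ball _ _ hR.le, finrank_euclideanSpace_fin,
      ENNReal.toReal_mul, ENNReal.toReal_ofReal (pow_nonneg hR.le n)]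
  rw [hvol] at hK_le
  have hsub : ball x₀ R \ ball x₀ r ⊆ ball x₀ R := Set.diff_subset
  have hbound : ∀ x ∈ ball x₀ R \ ball x₀ r, f x ≤ |u x| ^ (p - 1) / r ^ ((n : ℝ) + s * p) := by
    intro x hx
    have hxr : r ≤ ‖x - x₀‖ := by
      have h2 : x ∉ ball x₀ r := hx.2
      rw [mem_ball, dist_eq_norm, not_lt] at h2
      exact h2
    have hde : (0:ℝ) < r ^ ((n : ℝ) + s * p) := Real.rpow_pos_of_pos hr _
    have hnum : (0:ℝ) ≤ |u x| ^ (p - 1) := Real.rpow_nonneg (abs_nonneg _) _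
    have hden : r ^ ((n : ℝ) + s * p) ≤ ‖x - x₀‖ ^ ((n : ℝ) + s * p) :=
      Real.rpow_le_rpow hr.le hxr (by positivity)
    exact div_le_div_of_nonneg_left hnum hde hden
  have hg_int : IntegrableOn (fun x => |u x| ^ (p - 1) / r ^ ((n : ℝ) + s * p))
      (ball x₀ R \ ball x₀ r) := ((IntegrableOn.mono_set hK_int hsub)).div_const _
  have hAnnInt : IntegrableOn f (ball x₀ R \ ball x₀ r) := by
    refine Integrable.mono' hg_int hfm.aestronglyMeasurable.restrict ?_
    filter_upwards [ae_restrict_mem (measurableSet_ball.diff measurableSet_ball)] with x hx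
    rw [Real.norm_eq_abs, abs_of_nonneg (hf0 x)]
    exact hbound x hx
  have hset : (ball x₀ r)ᶜ = (ball x₀ R \ ball x₀ r) ∪ (ball x₀ R)ᶜ := by
    have hss : ball x₀ r ⊆ ball x₀ R := ball_subset_ball hrR.le
    ext x
    simp only [Set.mem_compl_iff, Set.mem_union, Set.mem_diff]
    constructor
    · intro hx
      by_cases hxR : x ∈ ball x₀ R
      · exact Or.inl ⟨hxR, hx⟩
      · exact Or.inr hxR
    · rintro (⟨_, hx⟩ | hx)
      · exact hx
      · exact fun hc => hx (hss hc)
  have hdisj : Disjoint (ball x₀ R \ ball x₀ r) (ball x₀ R)ᶜ :=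
    disjoint_compl_right.mono_left Set.diff_subset
  have hsplit : ∫ x in (ball x₀ r)ᶜ, f x =
      (∫ x in ball x₀ R \ ball x₀ r, f x) + ∫ x in (ball x₀ R)ᶜ, f x := by
    rw [hset]
    exact setIntegral_union hdisj measurableSet_ball.compl hAnnInt hIR
  set T := ∫ x in (ball x₀ R)ᶜ, f x with hTdef
  set I := ∫ x in ball x₀ R, |u x| ^ p with hIdef
  have hT0 : 0 ≤ T := setIntegral_nonneg measurableSet_ball.compl fun x _ => hf0 x
  have hI0 : 0 ≤ I := setIntegral_nonneg measurableSet_ball fun x _ =>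
    Real.rpow_nonneg (abs_nonneg _) _
  have hJle : (∫ x in ball x₀ R \ ball x₀ r, f x) ≤
      (∫ x in ball x₀ R, |u x| ^ (p - 1)) / r ^ ((n : ℝ) + s * p) := by
    calc (∫ x in ball x₀ R \ ball x₀ r, f x)
        ≤ ∫ x in ball x₀ R \ ball x₀ r, |u x| ^ (p - 1) / r ^ ((n : ℝ) + s * p) :=
          setIntegral_mono_on hAnnInt hg_int (measurableSet_ball.diff measurableSet_ball) hbound
      _ = (∫ x in ball x₀ R \ ball x₀ r, |u x| ^ (p - 1)) / r ^ ((n : ℝ) + s * p) :=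
          integral_div _ _
      _ ≤ (∫ x in ball x₀ R, |u x| ^ (p - 1)) / r ^ ((n : ℝ) + s * p) := by
          apply div_le_div_of_nonneg_right ?_ (Real.rpow_pos_of_pos hr _).le
          exact setIntegral_mono_set hK_int
            (Filter.Eventually.of_forall fun x => Real.rpow_nonneg (abs_nonneg _) _)
            (HasSubset.Subset.eventuallyLE hsub)
  set K := ∫ x in ball x₀ R, |u x| ^ (p - 1) with hKdef
  set a := (R ^ (s * p) * T) ^ (1 / (p - 1)) with hadef
  set b := R ^ (-(n : ℝ) / p) * I ^ (1 / p) with hbdef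
  have ha0 : 0 ≤ a := Real.rpow_nonneg (mul_nonneg (Real.rpow_nonneg hR.le _) hT0) _
  have hb0 : 0 ≤ b := mul_nonneg (Real.rpow_nonneg hR.le _) (Real.rpow_nonneg hI0 _)
  set W := (a + b) ^ (p - 1) with hWdef
  have hW0 : 0 ≤ W := Real.rpow_nonneg (by linarith) _
  have hB : R ^ (s * p) * T ≤ W := by
    have h1 : a ^ (p - 1) = R ^ (s * p) * T := by
      rw [hadef, ← Real.rpow_mul (mul_nonneg (Real.rpow_nonneg hR.le _) hT0),
        one_div_mul_cancel hp1.ne', Real.rpow_one]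
    calc R ^ (s * p) * T = a ^ (p - 1) := h1.symm
      _ ≤ W := Real.rpow_le_rpow ha0 (le_add_of_nonneg_right hb0) hp1.le
  have hC : R ^ (-(n : ℝ) / p * (p - 1)) * I ^ ((p - 1) / p) ≤ W := by
    have h1 : b ^ (p - 1) = R ^ (-(n : ℝ) / p * (p - 1)) * I ^ ((p - 1) / p) := by
      rw [hbdef, Real.mul_rpow (Real.rpow_nonneg hR.le _) (Real.rpow_nonneg hI0 _),
        ← Real.rpow_mul hR.le, ← Real.rpow_mul hI0]
      have he : 1 / p * (p - 1) = (p - 1) / p := by ring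
      rw [he]
    calc R ^ (-(n : ℝ) / p * (p - 1)) * I ^ ((p - 1) / p) = b ^ (p - 1) := h1.symm
      _ ≤ W := Real.rpow_le_rpow hb0 (le_add_of_nonneg_left ha0) hp1.le
  have hD : (R / r) ^ (n : ℝ) * R ^ (-(n : ℝ) / p * (p - 1)) =
      r ^ (-(n : ℝ)) * R ^ ((n : ℝ) / p) := by
    have he : (n : ℝ) + -(n : ℝ) / p * (p - 1) = (n : ℝ) / p := by
      field_simp
      ring
    rw [Real.div_rpow hR.le hr.le, div_mul_eq_mul_div, ← Real.rpow_add hR, he,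
      Real.rpow_neg hr.le, div_eq_mul_inv, mul_comm]
  have hKRV : ((R : ℝ) ^ n * V) ^ (1 / p) = R ^ ((n : ℝ) / p) * V ^ (1 / p) := by
    rw [Real.mul_rpow (pow_nonneg hR.le n) hV0, ← Real.rpow_natCast R n,
      ← Real.rpow_mul hR.le, mul_one_div]
  have hrr : r ^ (s * p) / r ^ ((n : ℝ) + s * p) = r ^ (-(n : ℝ)) := by
    rw [← Real.rpow_sub hr]
    congr 1
    ring
  have hJ2 : r ^ (s * p) * (∫ x in ball x₀ R \ ball x₀ r, f x) ≤
      V ^ (1 / p) * (r ^ (-(n : ℝ)) * R ^ ((n : ℝ) / p) * I ^ ((p - 1) / p)) := by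
    have h1 : r ^ (s * p) * (∫ x in ball x₀ R \ ball x₀ r, f x) ≤
        r ^ (s * p) * ((I ^ ((p - 1) / p) * ((R : ℝ) ^ n * V) ^ (1 / p)) / r ^ ((n : ℝ) + s * p)) := by
      apply mul_le_mul_of_nonneg_left _ (Real.rpow_nonneg hr.le _)
      exact hJle.trans (div_le_div_of_nonneg_right hK_le (Real.rpow_pos_of_pos hr _).le)
    refine h1.trans (le_of_eq ?_)
    rw [hKRV]
    have h2 : r ^ (s * p) * ((I ^ ((p - 1) / p) * (R ^ ((n : ℝ) / p) * V ^ (1 / p))) /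
          r ^ ((n : ℝ) + s * p)) =
        (I ^ ((p - 1) / p) * (R ^ ((n : ℝ) / p) * V ^ (1 / p))) *
          (r ^ (s * p) / r ^ ((n : ℝ) + s * p)) := by
      ring
    rw [h2, hrr]
    ring
  have hE : (1 : ℝ) ≤ (R / r) ^ (n : ℝ) :=
    Real.one_le_rpow ((one_le_div hr).2 hrR.le) (Nat.cast_nonneg n)
  have hT2 : r ^ (s * p) * T ≤ R ^ (s * p) * T :=
    mul_le_mul_of_nonneg_right (Real.rpow_le_rpow hr.le hrR.le hsp.le) hT0
  have hV1 : V ^ (1 / p) ≤ V + 1 := by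
    rcases le_total V 1 with h | h
    · have := Real.rpow_le_one (z := 1 / p) hV0 h (by positivity)
      linarith
    · have h2 := Real.rpow_le_rpow_of_exponent_le h
        (show 1 / p ≤ 1 by rw [div_le_one hp0]; exact hp.le)
      rw [Real.rpow_one] at h2
      linarith
  rw [hsplit, mul_add]
  set X := (R / r) ^ (n : ℝ) with hXdef
  set D := R ^ (-(n : ℝ) / p * (p - 1)) * I ^ ((p - 1) / p) with hDdef
  set Q := r ^ (-(n : ℝ)) * R ^ ((n : ℝ) / p) * I ^ ((p - 1) / p) with hQdef
  have hX0 : 0 ≤ X := le_trans zero_le_one hE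
  have hQ0 : 0 ≤ Q := by
    apply mul_nonneg (mul_nonneg (Real.rpow_nonneg hr.le _) (Real.rpow_nonneg hR.le _))
    exact Real.rpow_nonneg hI0 _
  have hXD : X * D = Q := by
    rw [hDdef, hQdef, ← mul_assoc, hD]
  have f1 : V ^ (1 / p) * Q ≤ (V + 1) * Q := mul_le_mul_of_nonneg_right hV1 hQ0
  have f3 : (V + 1) * (X * D) ≤ (V + 1) * (X * W) :=
    mul_le_mul_of_nonneg_left (mul_le_mul_of_nonneg_left hC hX0) (by positivity)
  have h1X : (1 : ℝ) ≤ (V + 1) * X := by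
    have := mul_le_mul (show (1 : ℝ) ≤ V + 1 by linarith) hE zero_le_one (by linarith)
    simpa using this
  have f4 : W ≤ (V + 1) * X * W := le_mul_of_one_le_left hW0 h1X
  rw [hXD] at f3
  linarith [hJ2, hT2, hB, f1, f3, f4]
end
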